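/- Under hypotheses (H0)–(H3), if ψ: E→ℝ is Lipschitz with ⟨ψ,μ*⟩=0, then sup_{n≥1} E_μ |Z_n|^{2+δ} < ∞, where δ > 0 is the constant from hypothesis (H3); consequently the family (Z_n²)_{n≥1} is uniformly integrable: sup_{n≥1} E_μ(Z_n² 1_{{Z_n² ≥ k}}) ≤ k^{−δ/2} sup_{n≥1} E_μ|Z_n|^{2+δ} → 0 as k → ∞. -/

import Mathlib

open MeasureTheory ProbabilityTheory Filter Bornology
open scoped ENNReal NNReal Topology

variable {E : Type*} [MeasurableSpace E] [MetricSpace E] [CompleteSpace E]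
  [SecondCountableTopology E] [BorelSpace E]

/-- The Markov operator acting on functions: `Pf(x) = ∫ f(y) π(x, dy)`. -/
noncomputable def Pfun (π : Kernel E E) (f : E → ℝ) : E → ℝ := fun x => ∫ y, f y ∂(π x)

/-- The Markov operator acting on measures (the transfer operator `ν ↦ νP`). -/
noncomputable def Pmeas (π : Kernel E E) (ν : MeasureTheory.Measure E) :
    MeasureTheory.Measure E := ν.bind (fun x => π x)

/-- `ν ∈ M_{1,1}`: a Borel probability measure with finite first moment. -/
def FiniteFirstMoment (ν : MeasureTheory.Measure E) : Prop :=
  IsProbabilityMeasure ν ∧ ∃ x₀ : E, Integrable (fun x => dist x₀ x) ν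

/-- The Wasserstein (dual-Lipschitz) distance between two measures. -/
noncomputable def wassDist (ν₁ ν₂ : MeasureTheory.Measure E) : ℝ :=
  sSup {r : ℝ | ∃ f : E → ℝ, LipschitzWith 1 f ∧ r = |∫ x, f x ∂ν₁ - ∫ x, f x ∂ν₂|}

/-- The natural filtration of the coordinate process on `ℕ → E`. -/
def natFilt : Filtration ℕ (MeasurableSpace.pi : MeasurableSpace (ℕ → E)) :=
  Filtration.natural (fun k (ω : ℕ → E) => ω k)
    (fun k => (measurable_pi_apply k).stronglyMeasurable)

/-- `ℙ` is the law of the Markov chain on `E^ℕ` with transition probability `π` and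
initial distribution `ν`. -/
structure IsMarkovChainLaw (π : Kernel E E) (ν : MeasureTheory.Measure E)
    (P : MeasureTheory.Measure (ℕ → E)) : Prop where
  prob : IsProbabilityMeasure P
  init : P.map (fun ω => ω 0) = ν
  markov : ∀ (n : ℕ) (g : E → ℝ), Measurable g → IsBounded (Set.range g) →
    P[(fun ω => g (ω (n + 1))) | natFilt n] =ᵐ[P] fun ω => ∫ y, g y ∂(π (ω n))

/-- The corrector function `χ = ∑_{i≥0} Pⁱψ`. -/
noncomputable def chiFun (π : Kernel E E) (ψ : E → ℝ) : E → ℝ :=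
  fun x => ∑' i : ℕ, (Pfun π)^[i] ψ x

/-- The martingale `S_n = χ(X_n) - χ(X_0) + ∑_{i=0}^n ψ(X_i)` as a function of the trajectory. -/
noncomputable def SFun (π : Kernel E E) (ψ : E → ℝ) (n : ℕ) : (ℕ → E) → ℝ :=
  fun ω => chiFun π ψ (ω n) - chiFun π ψ (ω 0) + ∑ i ∈ Finset.range (n + 1), ψ (ω i)

/-- The martingale differences `Z_n = χ(X_n) - χ(X_{n-1}) + ψ(X_n)`. -/
noncomputable def ZFun (π : Kernel E E) (ψ : E → ℝ) (n : ℕ) : (ℕ → E) → ℝ :=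
  fun ω => chiFun π ψ (ω n) - chiFun π ψ (ω (n - 1)) + ψ (ω n)

/-!
The dual form `Pⁱf(x) = ⟨f, δₓPⁱ⟩` of the Markov operator turns (H2) into the estimates
`|Pⁱψ(x) - Pⁱψ(y)| ≲ γⁱ ρ(x, y)` and, since `⟨Pⁱψ, μ*⟩ = ⟨ψ, μ*⟩ = 0`,
`|Pⁱψ(x)| ≲ γⁱ ⟨ρ(x, ·), μ*⟩`.
Hence the series `χ = ∑ Pⁱψ` converges and `χ` is Lipschitz, so that
`|Z_n| ≤ a + b ρ(x₀, X_n) + b ρ(x₀, X_{n-1})` and (H3) bounds `E_μ |Z_n|^{2+δ}` uniformly.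
Uniform integrability of `Z_n²` is then Markov's inequality in the form
`Z² 1_{Z² ≥ k} ≤ k^{-δ/2} |Z|^{2+δ}`.
-/

section Wasserstein

variable {E : Type*} [MeasurableSpace E] [MetricSpace E] {ν ν₁ ν₂ : Measure E}

lemma wassDist_le_of_forall {b : ℝ}
    (h : ∀ f : E → ℝ, LipschitzWith 1 f → |∫ x, f x ∂ν₁ - ∫ x, f x ∂ν₂| ≤ b) :
    wassDist ν₁ ν₂ ≤ b :=
  csSup_le ⟨0, fun _ => 0, LipschitzWith.const' 0, by simp⟩ (by rintro _ ⟨f, hf, rfl⟩; exact h f hf)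

variable [OpensMeasurableSpace E]

lemma finiteFirstMoment_dirac (x : E) : FiniteFirstMoment (Measure.dirac x) :=
  ⟨inferInstance, x, integrable_dirac (by simp)⟩

lemma FiniteFirstMoment.integrable_of_lipschitzWith (hν : FiniteFirstMoment ν) {K : ℝ≥0}
    {f : E → ℝ} (hf : LipschitzWith K f) : Integrable f ν := by
  obtain ⟨_, x₀, hx₀⟩ := hν
  refine ((integrable_const |f x₀|).add (hx₀.const_mul K)).mono'
    hf.continuous.aestronglyMeasurable (ae_of_all _ fun x => ?_)
  have h := hf.dist_le_mul x₀ x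
  rw [Real.dist_eq, abs_sub_comm] at h
  rw [Real.norm_eq_abs, Pi.add_apply]
  linarith [abs_sub_abs_le_abs_sub (f x) (f x₀)]

lemma FiniteFirstMoment.integrable_dist (hν : FiniteFirstMoment ν) (x : E) :
    Integrable (dist x ·) ν :=
  hν.integrable_of_lipschitzWith (LipschitzWith.dist_right x)

lemma FiniteFirstMoment.abs_integral_sub_le (hν : FiniteFirstMoment ν) {f : E → ℝ}
    (hf : LipschitzWith 1 f) (x : E) : |∫ y, f y ∂ν - f x| ≤ ∫ y, dist x y ∂ν := by
  have := hν.1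
  have hfi := hν.integrable_of_lipschitzWith hf
  calc |∫ y, f y ∂ν - f x| = ‖∫ y, (f y - f x) ∂ν‖ := by
        rw [integral_sub hfi (integrable_const _), integral_const, Real.norm_eq_abs]
        simp
    _ ≤ ∫ y, dist x y ∂ν := norm_integral_le_of_norm_le (hν.integrable_dist x)
        (ae_of_all _ fun y => by
          rw [Real.norm_eq_abs, dist_comm]
          simpa [Real.dist_eq] using hf.dist_le_mul y x)

lemma abs_integral_sub_le_wassDist (h₁ : FiniteFirstMoment ν₁) (h₂ : FiniteFirstMoment ν₂)
    {f : E → ℝ} (hf : LipschitzWith 1 f) :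
    |∫ x, f x ∂ν₁ - ∫ x, f x ∂ν₂| ≤ wassDist ν₁ ν₂ := by
  obtain ⟨x₀, -⟩ := h₁.2
  refine le_csSup ⟨(∫ x, dist x₀ x ∂ν₁) + ∫ x, dist x₀ x ∂ν₂, ?_⟩ ⟨f, hf, rfl⟩
  rintro _ ⟨g, hg, rfl⟩
  calc |∫ x, g x ∂ν₁ - ∫ x, g x ∂ν₂| = |(∫ x, g x ∂ν₁ - g x₀) - (∫ x, g x ∂ν₂ - g x₀)| := by
        ring_nf
    _ ≤ |∫ x, g x ∂ν₁ - g x₀| + |∫ x, g x ∂ν₂ - g x₀| := abs_sub _ _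
    _ ≤ _ := add_le_add (h₁.abs_integral_sub_le hg x₀) (h₂.abs_integral_sub_le hg x₀)

lemma wassDist_nonneg (h₁ : FiniteFirstMoment ν₁) (h₂ : FiniteFirstMoment ν₂) :
    0 ≤ wassDist ν₁ ν₂ :=
  (abs_nonneg _).trans (abs_integral_sub_le_wassDist h₁ h₂ (LipschitzWith.const' (0 : ℝ)))

lemma FiniteFirstMoment.wassDist_dirac_le (hν : FiniteFirstMoment ν) (x : E) :
    wassDist (Measure.dirac x) ν ≤ ∫ y, dist x y ∂ν :=
  wassDist_le_of_forall fun f hf => by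
    rw [integral_dirac, abs_sub_comm]
    exact hν.abs_integral_sub_le hf x

lemma wassDist_dirac_dirac_le (x y : E) :
    wassDist (Measure.dirac x) (Measure.dirac y) ≤ dist x y := by
  simpa [integral_dirac] using (finiteFirstMoment_dirac y).wassDist_dirac_le x

lemma LipschitzWith.abs_integral_sub_le_mul_wassDist (h₁ : FiniteFirstMoment ν₁)
    (h₂ : FiniteFirstMoment ν₂) {K : ℝ≥0} {f : E → ℝ} (hf : LipschitzWith K f) :
    |∫ x, f x ∂ν₁ - ∫ x, f x ∂ν₂| ≤ K * wassDist ν₁ ν₂ := by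
  rcases eq_or_ne K 0 with rfl | hK
  · obtain ⟨x₀, -⟩ := h₁.2
    have hconst : f = fun _ => f x₀ := funext fun x => by simpa using hf.dist_le_mul x x₀
    have := h₁.1
    have := h₂.1
    rw [hconst]
    simp
  have hKpos : (0 : ℝ) < K := by positivity
  have hg : LipschitzWith 1 (fun x => f x / K) := LipschitzWith.of_dist_le_mul fun x y => by
    rw [Real.dist_eq, ← sub_div, abs_div, NNReal.abs_eq, NNReal.coe_one, one_mul,
      div_le_iff₀ hKpos, mul_comm, ← Real.dist_eq]
    exact hf.dist_le_mul x y
  have h := abs_integral_sub_le_wassDist h₁ h₂ hg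
  rwa [integral_div, integral_div, ← sub_div, abs_div, NNReal.abs_eq, div_le_iff₀ hKpos,
    mul_comm] at h

end Wasserstein

section MarkovOperator

variable {E : Type*} [MeasurableSpace E]

lemma integral_Pmeas (π : Kernel E E) (ν : Measure E) {f : E → ℝ}
    (hf : Integrable f (Pmeas π ν)) : ∫ x, f x ∂(Pmeas π ν) = ∫ x, Pfun π f x ∂ν := by
  simpa [Pmeas, Pfun, ← Measure.comp_eq_comp_const_apply] using
    Kernel.integral_comp (κ := Kernel.const Unit ν) (a := ()) hf

lemma Pfun_eq_integral_Pmeas_dirac (π : Kernel E E) (f : E → ℝ) (x : E) :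
    Pfun π f x = ∫ y, f y ∂(Pmeas π (Measure.dirac x)) := by
  rw [Pmeas, Measure.dirac_bind π.measurable]
  rfl

variable [MetricSpace E]

/-- Hypotheses (H1) and (H2) on the Markov operator. -/
structure HasWassersteinGap (π : Kernel E E) (c γ : ℝ) : Prop where
  mapsTo : ∀ ν : Measure E, FiniteFirstMoment ν → FiniteFirstMoment (Pmeas π ν)
  contract : ∀ n : ℕ, 1 ≤ n → ∀ ν₁ ν₂ : Measure E, FiniteFirstMoment ν₁ →
    FiniteFirstMoment ν₂ →
    wassDist ((Pmeas π)^[n] ν₁) ((Pmeas π)^[n] ν₂) ≤ c * γ ^ n * wassDist ν₁ ν₂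

namespace HasWassersteinGap

variable {π : Kernel E E} {c γ : ℝ} {ν ν₁ ν₂ : Measure E}

lemma finiteFirstMoment_iterate (hP : HasWassersteinGap π c γ) (hν : FiniteFirstMoment ν) :
    ∀ n : ℕ, FiniteFirstMoment ((Pmeas π)^[n] ν)
  | 0 => hν
  | n + 1 => by
    rw [Function.iterate_succ_apply']
    exact hP.mapsTo _ (hP.finiteFirstMoment_iterate hν n)

variable [OpensMeasurableSpace E]

-- `max c 1` rather than `c` so that the bound also covers `n = 0`, about which (H2) says nothing.
lemma wassDist_iterate_le (hP : HasWassersteinGap π c γ) (hγ : 0 ≤ γ)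
    (h₁ : FiniteFirstMoment ν₁) (h₂ : FiniteFirstMoment ν₂) (n : ℕ) :
    wassDist ((Pmeas π)^[n] ν₁) ((Pmeas π)^[n] ν₂) ≤ max c 1 * γ ^ n * wassDist ν₁ ν₂ := by
  have hW := wassDist_nonneg h₁ h₂
  rcases Nat.eq_zero_or_pos n with rfl | hn
  · simpa using le_mul_of_one_le_left hW (le_max_right c 1)
  · refine (hP.contract n hn _ _ h₁ h₂).trans ?_
    gcongr
    exact le_max_left c 1

lemma lipschitzWith_Pfun (hP : HasWassersteinGap π c γ) (hγ : 0 ≤ γ) {K : ℝ≥0} {f : E → ℝ}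
    (hf : LipschitzWith K f) : LipschitzWith (K * (max c 1 * γ).toNNReal) (Pfun π f) := by
  refine LipschitzWith.of_dist_le_mul fun x y => ?_
  have hc : 0 ≤ max c 1 := le_max_of_le_right zero_le_one
  have hW := hP.wassDist_iterate_le hγ (finiteFirstMoment_dirac x) (finiteFirstMoment_dirac y) 1
  rw [Function.iterate_one, pow_one] at hW
  rw [Real.dist_eq, NNReal.coe_mul, Real.coe_toNNReal _ (mul_nonneg hc hγ),
    Pfun_eq_integral_Pmeas_dirac, Pfun_eq_integral_Pmeas_dirac]
  calc _ ≤ K * wassDist (Pmeas π (Measure.dirac x)) (Pmeas π (Measure.dirac y)) :=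
        hf.abs_integral_sub_le_mul_wassDist (hP.mapsTo _ (finiteFirstMoment_dirac x))
          (hP.mapsTo _ (finiteFirstMoment_dirac y))
    _ ≤ K * (max c 1 * γ * dist x y) := by
        gcongr
        exact hW.trans (by gcongr; exact wassDist_dirac_dirac_le x y)
    _ = _ := by ring

lemma integral_iterate_Pfun (hP : HasWassersteinGap π c γ) (hγ : 0 ≤ γ)
    (hν : FiniteFirstMoment ν) {K : ℝ≥0} {f : E → ℝ} (hf : LipschitzWith K f) (n : ℕ) :
    ∫ x, (Pfun π)^[n] f x ∂ν = ∫ x, f x ∂((Pmeas π)^[n] ν) := by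
  induction n generalizing K f with
  | zero => rfl
  | succ n ih =>
    rw [Function.iterate_succ_apply, ih (hP.lipschitzWith_Pfun hγ hf),
      Function.iterate_succ_apply', integral_Pmeas]
    exact (hP.mapsTo _ (hP.finiteFirstMoment_iterate hν n)).integrable_of_lipschitzWith hf

lemma abs_integral_iterate_Pfun_sub_le (hP : HasWassersteinGap π c γ) (hγ : 0 ≤ γ)
    (h₁ : FiniteFirstMoment ν₁) (h₂ : FiniteFirstMoment ν₂) {K : ℝ≥0} {f : E → ℝ}
    (hf : LipschitzWith K f) (n : ℕ) :
    |∫ x, (Pfun π)^[n] f x ∂ν₁ - ∫ x, (Pfun π)^[n] f x ∂ν₂| ≤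
      K * max c 1 * γ ^ n * wassDist ν₁ ν₂ := by
  rw [hP.integral_iterate_Pfun hγ h₁ hf, hP.integral_iterate_Pfun hγ h₂ hf]
  calc _ ≤ K * wassDist ((Pmeas π)^[n] ν₁) ((Pmeas π)^[n] ν₂) :=
        hf.abs_integral_sub_le_mul_wassDist (hP.finiteFirstMoment_iterate h₁ n)
          (hP.finiteFirstMoment_iterate h₂ n)
    _ ≤ K * (max c 1 * γ ^ n * wassDist ν₁ ν₂) := by
        gcongr
        exact hP.wassDist_iterate_le hγ h₁ h₂ n
    _ = _ := by ring

end HasWassersteinGap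

end MarkovOperator

section Corrector

variable {E : Type*} [MeasurableSpace E] [MetricSpace E] [OpensMeasurableSpace E]
  {π : Kernel E E} {c γ : ℝ} {μstar : Measure E} {K : ℝ≥0} {f : E → ℝ}

namespace HasWassersteinGap

lemma abs_iterate_Pfun_sub_le (hP : HasWassersteinGap π c γ) (hγ : 0 ≤ γ)
    (hf : LipschitzWith K f) (n : ℕ) (x y : E) :
    |(Pfun π)^[n] f x - (Pfun π)^[n] f y| ≤ K * max c 1 * γ ^ n * dist x y := by
  have hc : 0 ≤ max c 1 := le_max_of_le_right zero_le_one
  simpa [integral_dirac] using (hP.abs_integral_iterate_Pfun_sub_le hγ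
    (finiteFirstMoment_dirac x) (finiteFirstMoment_dirac y) hf n).trans
    (by gcongr; exact wassDist_dirac_dirac_le x y)

lemma abs_iterate_Pfun_le (hP : HasWassersteinGap π c γ) (hγ : 0 ≤ γ)
    (hstar : FiniteFirstMoment μstar) (hinv : Pmeas π μstar = μstar)
    (hf : LipschitzWith K f) (hf0 : ∫ x, f x ∂μstar = 0) (n : ℕ) (x : E) :
    |(Pfun π)^[n] f x| ≤ K * max c 1 * γ ^ n * ∫ y, dist x y ∂μstar := by
  have hc : 0 ≤ max c 1 := le_max_of_le_right zero_le_one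
  have h0 : ∫ y, (Pfun π)^[n] f y ∂μstar = 0 := by
    rw [hP.integral_iterate_Pfun hγ hstar hf, Function.iterate_fixed hinv, hf0]
  simpa [integral_dirac, h0] using (hP.abs_integral_iterate_Pfun_sub_le hγ
    (finiteFirstMoment_dirac x) hstar hf n).trans
    (by gcongr; exact hstar.wassDist_dirac_le x)

lemma lipschitzWith_chiFun (hP : HasWassersteinGap π c γ) (hγ₀ : 0 ≤ γ) (hγ₁ : γ < 1)
    (hstar : FiniteFirstMoment μstar) (hinv : Pmeas π μstar = μstar)
    (hf : LipschitzWith K f) (hf0 : ∫ x, f x ∂μstar = 0) :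
    ∃ L : ℝ≥0, LipschitzWith L (chiFun π f) := by
  set A : ℝ := K * max c 1
  have hA : 0 ≤ A := mul_nonneg K.2 (le_max_of_le_right zero_le_one)
  have hgeom := hasSum_geometric_of_lt_one hγ₀ hγ₁
  have hsummable (x : E) : Summable fun n => (Pfun π)^[n] f x :=
    .of_norm_bounded (hgeom.summable.mul_left (A * ∫ y, dist x y ∂μstar)) fun n => by
      rw [Real.norm_eq_abs, mul_right_comm]
      exact hP.abs_iterate_Pfun_le hγ₀ hstar hinv hf hf0 n x
  refine ⟨(A * (1 - γ)⁻¹).toNNReal, LipschitzWith.of_dist_le_mul fun x y => ?_⟩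
  rw [Real.coe_toNNReal _ (mul_nonneg hA (inv_nonneg.2 (sub_nonneg.2 hγ₁.le))), Real.dist_eq,
    chiFun, chiFun, ← (hsummable x).tsum_sub (hsummable y), ← Real.norm_eq_abs,
    mul_right_comm]
  exact tsum_of_norm_bounded (hgeom.mul_left (A * dist x y)) fun n => by
    rw [Real.norm_eq_abs, mul_right_comm]
    exact hP.abs_iterate_Pfun_sub_le hγ₀ hf n x y

end HasWassersteinGap

end Corrector

section MartingaleDifferences

variable {E : Type*} [MeasurableSpace E] [MetricSpace E] {π : Kernel E E} {ψ : E → ℝ}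

lemma abs_ZFun_le {Kχ Kψ : ℝ≥0} (hχ : LipschitzWith Kχ (chiFun π ψ))
    (hψ : LipschitzWith Kψ ψ) (x₀ : E) (n : ℕ) (ω : ℕ → E) :
    |ZFun π ψ n ω| ≤
      |ψ x₀| + (Kχ + Kψ) * dist x₀ (ω n) + (Kχ + Kψ) * dist x₀ (ω (n - 1)) := by
  have hχ' := hχ.dist_le_mul (ω n) (ω (n - 1))
  have hψ' := hψ.dist_le_mul (ω n) x₀
  rw [Real.dist_eq] at hχ' hψ'
  have htri : dist (ω n) (ω (n - 1)) ≤ dist x₀ (ω n) + dist x₀ (ω (n - 1)) :=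
    dist_triangle_left _ _ _
  have hK : (Kχ : ℝ) * dist (ω n) (ω (n - 1)) ≤ Kχ * (dist x₀ (ω n) + dist x₀ (ω (n - 1))) :=
    mul_le_mul_of_nonneg_left htri Kχ.2
  have hpos : 0 ≤ (Kψ : ℝ) * dist x₀ (ω (n - 1)) := mul_nonneg Kψ.2 dist_nonneg
  rw [dist_comm] at hψ'
  unfold ZFun
  linarith [abs_add_le (chiFun π ψ (ω n) - chiFun π ψ (ω (n - 1))) (ψ (ω n)),
    abs_sub_abs_le_abs_sub (ψ (ω n)) (ψ x₀)]

variable [OpensMeasurableSpace E]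

lemma measurable_ZFun (hχ : Continuous (chiFun π ψ)) (hψ : Continuous ψ) (n : ℕ) :
    Measurable (ZFun π ψ n) := by
  have := hχ.measurable
  have := hψ.measurable
  unfold ZFun
  fun_prop

end MartingaleDifferences

section Moments

lemma abs_rpow_le_of_abs_le_add_add {y a b u v p : ℝ} (ha : 0 ≤ a) (hb : 0 ≤ b) (hu : 0 ≤ u)
    (hv : 0 ≤ v) (hp : 1 ≤ p) (h : |y| ≤ a + b * u + b * v) :
    |y| ^ p ≤ 3 ^ (p - 1) * (a ^ p + b ^ p * (u ^ p + v ^ p)) := by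
  have hbu := mul_nonneg hb hu
  have hbv := mul_nonneg hb hv
  have hconvex : (a + b * u + b * v) ^ p ≤ 3 ^ (p - 1) * (a ^ p + (b * u) ^ p + (b * v) ^ p) := by
    simpa [Fin.sum_univ_three, add_assoc] using
      Real.rpow_sum_le_const_mul_sum_rpow_of_nonneg (s := Finset.univ) (f := ![a, b * u, b * v])
        hp (by simp [Fin.forall_fin_succ, ha, hbu, hbv])
  calc |y| ^ p ≤ (a + b * u + b * v) ^ p :=
        Real.rpow_le_rpow (abs_nonneg y) h (by linarith)
    _ ≤ 3 ^ (p - 1) * (a ^ p + (b * u) ^ p + (b * v) ^ p) := hconvex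
    _ = 3 ^ (p - 1) * (a ^ p + b ^ p * (u ^ p + v ^ p)) := by
        rw [Real.mul_rpow hb hu, Real.mul_rpow hb hv]
        ring

variable {Ω : Type*} [MeasurableSpace Ω] {P : Measure Ω}

lemma integrable_abs_rpow_and_integral_le_of_abs_le_add_add [IsProbabilityMeasure P]
    {Y U V : Ω → ℝ} {a b p M : ℝ} (hY : AEStronglyMeasurable Y P) (ha : 0 ≤ a) (hb : 0 ≤ b)
    (hU : ∀ ω, 0 ≤ U ω) (hV : ∀ ω, 0 ≤ V ω) (hp : 1 ≤ p)
    (hUi : Integrable (fun ω => U ω ^ p) P) (hVi : Integrable (fun ω => V ω ^ p) P)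
    (hUM : ∫ ω, U ω ^ p ∂P ≤ M) (hVM : ∫ ω, V ω ^ p ∂P ≤ M)
    (hbound : ∀ ω, |Y ω| ≤ a + b * U ω + b * V ω) :
    Integrable (fun ω => |Y ω| ^ p) P ∧
      ∫ ω, |Y ω| ^ p ∂P ≤ 3 ^ (p - 1) * (a ^ p + b ^ p * (M + M)) := by
  have hUV : Integrable (fun ω => U ω ^ p + V ω ^ p) P := hUi.add hVi
  have hG : Integrable (fun ω => 3 ^ (p - 1) * (a ^ p + b ^ p * (U ω ^ p + V ω ^ p))) P :=
    ((integrable_const _).add (hUV.const_mul _)).const_mul _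
  have hle (ω : Ω) := abs_rpow_le_of_abs_le_add_add ha hb (hU ω) (hV ω) hp (hbound ω)
  have hint : Integrable (fun ω => |Y ω| ^ p) P :=
    hG.mono' ((Real.continuous_rpow_const (by linarith)).comp_aestronglyMeasurable hY.norm)
      (ae_of_all _ fun ω => by
        rw [Real.norm_eq_abs, abs_of_nonneg (Real.rpow_nonneg (abs_nonneg _) _)]
        exact hle ω)
  refine ⟨hint, (integral_mono hint hG hle).trans ?_⟩
  rw [integral_const_mul, integral_add (integrable_const _) (hUV.const_mul _),
    integral_const_mul, integral_add hUi hVi]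
  simp only [integral_const, probReal_univ, smul_eq_mul, one_mul]
  have h3 : (0 : ℝ) ≤ 3 ^ (p - 1) := by positivity
  have hbp : 0 ≤ b ^ p := Real.rpow_nonneg hb p
  gcongr

lemma sq_le_rpow_neg_mul_abs_rpow {y k δ : ℝ} (hk : 0 < k) (hδ : 0 ≤ δ) (h : k ≤ y ^ 2) :
    y ^ 2 ≤ k ^ (-(δ / 2)) * |y| ^ (2 + δ) := by
  have hsq : |y| ^ (2 : ℝ) = y ^ 2 := by rw [Real.rpow_two, sq_abs]
  have hpow : k ^ (δ / 2) ≤ |y| ^ δ := by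
    calc k ^ (δ / 2) ≤ (|y| ^ (2 : ℝ)) ^ (δ / 2) :=
          Real.rpow_le_rpow hk.le (hsq ▸ h) (by linarith)
      _ = |y| ^ δ := by rw [← Real.rpow_mul (abs_nonneg y)]; ring_nf
  calc y ^ 2 = k ^ (-(δ / 2)) * (k ^ (δ / 2) * y ^ 2) := by
        rw [← mul_assoc, ← Real.rpow_add hk]
        simp
    _ ≤ k ^ (-(δ / 2)) * (|y| ^ δ * |y| ^ (2 : ℝ)) := by
        rw [hsq]
        gcongr
    _ = k ^ (-(δ / 2)) * |y| ^ (2 + δ) := by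
        rw [← Real.rpow_add' (abs_nonneg y) (by linarith), add_comm δ]

lemma setIntegral_sq_le_rpow_neg_mul_integral {Y : Ω → ℝ} {δ k : ℝ} (hY : Measurable Y)
    (hint : Integrable (fun ω => |Y ω| ^ (2 + δ)) P) (hδ : 0 ≤ δ) (hk : 0 < k) :
    ∫ ω in {ω | k ≤ Y ω ^ 2}, Y ω ^ 2 ∂P ≤ k ^ (-(δ / 2)) * ∫ ω, |Y ω| ^ (2 + δ) ∂P := by
  have hS : MeasurableSet {ω | k ≤ Y ω ^ 2} := measurableSet_le measurable_const (hY.pow_const 2)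
  calc ∫ ω in {ω | k ≤ Y ω ^ 2}, Y ω ^ 2 ∂P
      ≤ ∫ ω in {ω | k ≤ Y ω ^ 2}, k ^ (-(δ / 2)) * |Y ω| ^ (2 + δ) ∂P :=
        integral_mono_of_nonneg (ae_of_all _ fun ω => sq_nonneg _)
          (hint.const_mul _).integrableOn
          ((ae_restrict_iff' hS).2 (ae_of_all _ fun ω hω => sq_le_rpow_neg_mul_abs_rpow hk hδ hω))
    _ = k ^ (-(δ / 2)) * ∫ ω in {ω | k ≤ Y ω ^ 2}, |Y ω| ^ (2 + δ) ∂P := integral_const_mul _ _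
    _ ≤ k ^ (-(δ / 2)) * ∫ ω, |Y ω| ^ (2 + δ) ∂P :=
        mul_le_mul_of_nonneg_left
          (setIntegral_le_integral hint (ae_of_all _ fun ω => by positivity))
          (Real.rpow_nonneg hk.le _)

end Moments

theorem Zn_uniform_moment_bound_and_uniform_integrability_general
    {E : Type*} [MeasurableSpace E] [MetricSpace E]
    [SecondCountableTopology E] [BorelSpace E]
    (π : Kernel E E) (γ c : ℝ) (hγ : γ ∈ Set.Ioo (0 : ℝ) 1)
    -- (H1): `P` preserves `M_{1,1}`
    (hH1 : ∀ ν : MeasureTheory.Measure E, FiniteFirstMoment ν → FiniteFirstMoment (Pmeas π ν))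
    -- (H2): spectral gap in the Wasserstein metric
    (hH2 : ∀ n : ℕ, 1 ≤ n → ∀ ν₁ ν₂ : MeasureTheory.Measure E, FiniteFirstMoment ν₁ →
      FiniteFirstMoment ν₂ →
      wassDist ((Pmeas π)^[n] ν₁) ((Pmeas π)^[n] ν₂) ≤ c * γ ^ n * wassDist ν₁ ν₂)
    -- the chain: initial distribution `μ ∈ M_{1,1}` and its law `Pμ` on `E^ℕ`
    (μ : MeasureTheory.Measure E)
    (Pμ : MeasureTheory.Measure (ℕ → E)) (hPμ : IsMarkovChainLaw π μ Pμ)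
    -- (H3): uniformly bounded moments of order `2 + δ`
    (x₀ : E) (δ : ℝ) (hδ : 0 < δ)
    (hH3int : ∀ n : ℕ, Integrable (fun ω : ℕ → E => dist x₀ (ω n) ^ (2 + δ)) Pμ)
    (hH3 : ∃ M : ℝ, ∀ n : ℕ, ∫ ω : ℕ → E, dist x₀ (ω n) ^ (2 + δ) ∂Pμ ≤ M)
    -- the unique invariant measure `μ* ∈ M_{1,1}`
    (μstar : MeasureTheory.Measure E) (hμstar : FiniteFirstMoment μstar)
    (hinv : Pmeas π μstar = μstar)
    -- `ψ` is Lipschitz with `⟨ψ, μ*⟩ = 0`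
    (ψ : E → ℝ) (Lψ : ℝ≥0) (hψ : LipschitzWith Lψ ψ) (hψ0 : ∫ x, ψ x ∂μstar = 0) :
    ∃ M : ℝ,
      (∀ n : ℕ, 1 ≤ n → Integrable (fun ω => |ZFun π ψ n ω| ^ (2 + δ)) Pμ) ∧
      (∀ n : ℕ, 1 ≤ n → ∫ ω, |ZFun π ψ n ω| ^ (2 + δ) ∂Pμ ≤ M) ∧
      (∀ k : ℝ, 0 < k → ∀ n : ℕ, 1 ≤ n →
        ∫ ω in {ω : ℕ → E | k ≤ (ZFun π ψ n ω) ^ 2}, (ZFun π ψ n ω) ^ 2 ∂Pμ ≤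
          k ^ (-(δ / 2)) * M) ∧
      Tendsto (fun k : ℝ => k ^ (-(δ / 2)) * M) atTop (𝓝 0) := by
  have := hPμ.prob
  have hP : HasWassersteinGap π c γ := ⟨hH1, hH2⟩
  obtain ⟨Kχ, hχ⟩ := hP.lipschitzWith_chiFun hγ.1.le hγ.2 hμstar hinv hψ hψ0
  obtain ⟨M, hM⟩ := hH3
  have hZm (n : ℕ) := measurable_ZFun hχ.continuous hψ.continuous n
  have hZ (n : ℕ) := integrable_abs_rpow_and_integral_le_of_abs_le_add_add
    (hZm n).aestronglyMeasurable (abs_nonneg (ψ x₀)) (Kχ + Lψ).2 (fun _ => dist_nonneg)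
    (fun _ => dist_nonneg) (by linarith) (hH3int n) (hH3int (n - 1)) (hM n) (hM (n - 1))
    (abs_ZFun_le hχ hψ x₀ n)
  refine ⟨_, fun n _ => (hZ n).1, fun n _ => (hZ n).2, fun k hk n _ => ?_, ?_⟩
  · exact (setIntegral_sq_le_rpow_neg_mul_integral (hZm n) (hZ n).1 hδ.le hk).trans
      (mul_le_mul_of_nonneg_left (hZ n).2 (Real.rpow_nonneg hk.le _))
  · simpa using (tendsto_rpow_neg_atTop (half_pos hδ)).mul_const _

/-- `sup_{n≥1} E_μ |Z_n|^{2+δ} < ∞` and the resulting uniform integrability of `(Z_n²)`. -/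
theorem Zn_uniform_moment_bound_and_uniform_integrability
    {E : Type*} [MeasurableSpace E] [MetricSpace E] [CompleteSpace E]
    [SecondCountableTopology E] [BorelSpace E]
    (π : Kernel E E) [IsMarkovKernel π] (γ c : ℝ) (hγ : γ ∈ Set.Ioo (0 : ℝ) 1) (hc : 0 < c)
    -- (H0): the Feller property
    (hH0 : ∀ f : E → ℝ, Continuous f → IsBounded (Set.range f) → Continuous (Pfun π f))
    -- (H1): `P` preserves `M_{1,1}`
    (hH1 : ∀ ν : MeasureTheory.Measure E, FiniteFirstMoment ν → FiniteFirstMoment (Pmeas π ν))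
    -- (H2): spectral gap in the Wasserstein metric
    (hH2 : ∀ n : ℕ, 1 ≤ n → ∀ ν₁ ν₂ : MeasureTheory.Measure E, FiniteFirstMoment ν₁ →
      FiniteFirstMoment ν₂ →
      wassDist ((Pmeas π)^[n] ν₁) ((Pmeas π)^[n] ν₂) ≤ c * γ ^ n * wassDist ν₁ ν₂)
    -- the chain: initial distribution `μ ∈ M_{1,1}` and its law `Pμ` on `E^ℕ`
    (μ : MeasureTheory.Measure E) (hμ : FiniteFirstMoment μ)
    (Pμ : MeasureTheory.Measure (ℕ → E)) (hPμ : IsMarkovChainLaw π μ Pμ)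
    -- (H3): uniformly bounded moments of order `2 + δ`
    (x₀ : E) (δ : ℝ) (hδ : 0 < δ)
    (hH3int : ∀ n : ℕ, Integrable (fun ω : ℕ → E => dist x₀ (ω n) ^ (2 + δ)) Pμ)
    (hH3 : ∃ M : ℝ, ∀ n : ℕ, ∫ ω : ℕ → E, dist x₀ (ω n) ^ (2 + δ) ∂Pμ ≤ M)
    -- the unique invariant measure `μ* ∈ M_{1,1}`
    (μstar : MeasureTheory.Measure E) (hμstar : FiniteFirstMoment μstar)
    (hinv : Pmeas π μstar = μstar)
    (huniq : ∀ ν : MeasureTheory.Measure E, IsProbabilityMeasure ν → Pmeas π ν = ν → ν = μstar)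
    -- `ψ` is Lipschitz with `⟨ψ, μ*⟩ = 0`
    (ψ : E → ℝ) (Lψ : ℝ≥0) (hψ : LipschitzWith Lψ ψ) (hψ0 : ∫ x, ψ x ∂μstar = 0) :
    ∃ M : ℝ,
      (∀ n : ℕ, 1 ≤ n → Integrable (fun ω => |ZFun π ψ n ω| ^ (2 + δ)) Pμ) ∧
      (∀ n : ℕ, 1 ≤ n → ∫ ω, |ZFun π ψ n ω| ^ (2 + δ) ∂Pμ ≤ M) ∧
      (∀ k : ℝ, 0 < k → ∀ n : ℕ, 1 ≤ n →
        ∫ ω in {ω : ℕ → E | k ≤ (ZFun π ψ n ω) ^ 2}, (ZFun π ψ n ω) ^ 2 ∂Pμ ≤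
          k ^ (-(δ / 2)) * M) ∧
      Tendsto (fun k : ℝ => k ^ (-(δ / 2)) * M) atTop (𝓝 0) :=
  Zn_uniform_moment_bound_and_uniform_integrability_general π γ c hγ hH1 hH2 μ Pμ hPμ x₀ δ hδ hH3int
    hH3 μstar hμstar hinv ψ Lψ hψ hψ0
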